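/- arXiv:math-ph/0512060 — 3 statements merged into one kernel-verified Lean document; each statement's English description precedes it below -/
import Mathlib

section
/- Let H be a complex Hilbert space and let S, T be bounded operators on H satisfying SS* = P₊, S*S = P₋ where P₊, P₋ are orthogonal projections with P₊ + P₋ = 1, and similarly TT* = Q₊, T*T = Q₋ with Q₊ + Q₋ = 1. If ST + TS = c·1 for some nonzero complex number c, then P₊H ∩ Q₊H = {0}, i.e. the infimum projection P₊ ∧ Q₊ equals 0. -/
open scoped InnerProductSpace

/-!
A vector `x` in the ranges of both `Pp` and `Qp` is killed by `Pm = S* S` and `Qm = T* T`,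
hence by `S` and `T` (the kernel of `A* A` is that of `A`). Then `c • x = (S T + T S) x = 0`.
-/

theorem ContinuousLinearMap.star_mul_self_apply_eq_zero_iff {𝕜 E : Type*} [RCLike 𝕜]
    [NormedAddCommGroup E] [InnerProductSpace 𝕜 E] [CompleteSpace E] (A : E →L[𝕜] E) (x : E) :
    (star A * A) x = 0 ↔ A x = 0 := by
  simpa [star_eq_adjoint] using SetLike.ext_iff.mp A.ker_adjoint_comp_self x

theorem ContinuousLinearMap.apply_eq_zero_of_add_eq_one_of_apply_eq_self {R M : Type*}
    [Semiring R] [TopologicalSpace M] [AddCommGroup M] [ContinuousAdd M] [Module R M]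
    {P Q : M →L[R] M} (hPQ : P + Q = 1) {x : M} (hx : P x = x) : Q x = 0 := by
  simpa [hx] using congrArg (· x) hPQ

theorem stmt1_general {H : Type*} [NormedAddCommGroup H] [InnerProductSpace ℂ H] [CompleteSpace H]
    (S T Pp Pm Qp Qm : H →L[ℂ] H) (c : ℂ) (hc : c ≠ 0)
    (hPsum : Pp + Pm = 1) (hQsum : Qp + Qm = 1)
    (hS2 : star S * S = Pm) (hT2 : star T * T = Qm)
    (hST : S * T + T * S = c • (1 : H →L[ℂ] H)) :
    ∀ x : H, Pp x = x → Qp x = x → x = 0 := by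
  intro x hPx hQx
  have hSx : S x = 0 := by
    rw [← S.star_mul_self_apply_eq_zero_iff, hS2]
    exact ContinuousLinearMap.apply_eq_zero_of_add_eq_one_of_apply_eq_self hPsum hPx
  have hTx : T x = 0 := by
    rw [← T.star_mul_self_apply_eq_zero_iff, hT2]
    exact ContinuousLinearMap.apply_eq_zero_of_add_eq_one_of_apply_eq_self hQsum hQx
  have hcx : c • x = 0 := by
    simpa [hSx, hTx] using (congrArg (· x) hST).symm
  exact (smul_eq_zero.mp hcx).resolve_left hc

/-- If `S S* = Pp`, `S* S = Pm` with `Pp + Pm = 1`, similarly for `T` and `Q±`,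
and `S T + T S = c·1` with `c ≠ 0`, then the ranges of `Pp` and `Qp` intersect
trivially, i.e. `Pp ∧ Qp = 0`. -/
theorem stmt1 {H : Type*} [NormedAddCommGroup H] [InnerProductSpace ℂ H] [CompleteSpace H]
    (S T Pp Pm Qp Qm : H →L[ℂ] H) (c : ℂ) (hc : c ≠ 0)
    (hPpsa : IsSelfAdjoint Pp) (hPpidem : Pp * Pp = Pp)
    (hPmsa : IsSelfAdjoint Pm) (hPmidem : Pm * Pm = Pm)
    (hQpsa : IsSelfAdjoint Qp) (hQpidem : Qp * Qp = Qp)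
    (hQmsa : IsSelfAdjoint Qm) (hQmidem : Qm * Qm = Qm)
    (hPsum : Pp + Pm = 1) (hQsum : Qp + Qm = 1)
    (hS1 : S * star S = Pp) (hS2 : star S * S = Pm)
    (hT1 : T * star T = Qp) (hT2 : star T * T = Qm)
    (hST : S * T + T * S = c • (1 : H →L[ℂ] H)) :
    ∀ x : H, Pp x = x → Qp x = x → x = 0 :=
  stmt1_general S T Pp Pm Qp Qm c hc hPsum hQsum hS2 hT2 hST
end

section
/- The normalized sine integral Si(z) = (2/π)∫₀^z (sin w / w) dw satisfies lim_{x→+∞} Si(x) = 1 and lim_{x→-∞} Si(x) = -1. -/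
open Filter

/-- The normalized sine integral `Si(x) = (2/π) ∫₀ˣ (sin t)/t dt`. -/
noncomputable def Si (x : ℝ) : ℝ := (2 / Real.pi) * ∫ t in (0:ℝ)..x, Real.sin t / t

open Filter Topology

open Real MeasureTheory Set intervalIntegral
open scoped FourierTransform

namespace SiAux

lemma abs_sin_le_abs (t : ℝ) : |Real.sin t| ≤ |t| := by
  have h := Real.sin_sq_le_sq (x := t)
  have := abs_le_of_sq_le_sq' (by simpa [sq_abs] using h) (abs_nonneg t)
  exact abs_le.2 this

lemma intInt_of_bound {f : ℝ → ℝ} (hm : Measurable f) {C : ℝ} (h : ∀ t, |f t| ≤ C) (a b : ℝ) :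
    IntervalIntegrable f volume a b := by
  rw [intervalIntegrable_iff]
  refine Integrable.mono' (g := fun _ : ℝ => C)
    (integrableOn_const measure_Ioc_lt_top.ne)
    hm.aestronglyMeasurable.restrict ?_
  exact Eventually.of_forall fun t => h t

lemma sin_div_meas : Measurable (fun t : ℝ => Real.sin t / t) := by measurability

lemma sin_div_bound (t : ℝ) : |Real.sin t / t| ≤ 1 := by
  rcases eq_or_ne t 0 with h | h
  · simp [h]
  · rw [abs_div, div_le_one (abs_pos.2 h)]
    exact abs_sin_le_abs t

lemma sin_div_intInt (a b : ℝ) :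
    IntervalIntegrable (fun t : ℝ => Real.sin t / t) volume a b :=
  intInt_of_bound sin_div_meas sin_div_bound a b

noncomputable def G (x : ℝ) : ℝ := ∫ t in (0:ℝ)..x, Real.sin t / t

lemma cos_div_sq_integrableOn :
    IntegrableOn (fun t : ℝ => Real.cos t / t ^ 2) (Set.Ioi 1) := by
  apply Integrable.mono' (g := fun t : ℝ => t ^ (-2 : ℝ))
    (integrableOn_Ioi_rpow_of_lt (by norm_num) one_pos)
  · exact (Measurable.div (by measurability) (by measurability)).aestronglyMeasurable.restrict
  · filter_upwards [ae_restrict_mem measurableSet_Ioi] with t ht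
    have ht1 : (1:ℝ) < t := ht
    have ht0 : (0:ℝ) < t := lt_trans one_pos ht1
    have hrp : t ^ (-2 : ℝ) = 1 / t ^ 2 := by
      rw [Real.rpow_neg ht0.le, show ((2:ℝ)) = ((2:ℕ) : ℝ) by norm_num, Real.rpow_natCast,
        inv_eq_one_div]
    rw [Real.norm_eq_abs, abs_div, hrp, abs_of_pos (pow_pos ht0 2),
      div_le_div_iff_of_pos_right (by positivity)]
    exact Real.abs_cos_le_one t

lemma parts {x : ℝ} (hx : 1 ≤ x) :
    ∫ t in (1:ℝ)..x, Real.sin t / t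
      = Real.cos 1 - Real.cos x / x - ∫ t in (1:ℝ)..x, Real.cos t / t ^ 2 := by
  have hIcc : Set.uIcc (1:ℝ) x = Set.Icc 1 x := Set.uIcc_of_le hx
  have hne : ∀ t ∈ Set.uIcc (1:ℝ) x, t ≠ 0 := by
    intro t ht
    rw [hIcc] at ht
    have : (1:ℝ) ≤ t := ht.1
    linarith
  have h1 : ∀ t ∈ Set.uIcc (1:ℝ) x, HasDerivAt (fun t : ℝ => t⁻¹) (-(t^2)⁻¹) t :=
    fun t ht => hasDerivAt_inv (hne t ht)
  have h2 : ∀ t ∈ Set.uIcc (1:ℝ) x, HasDerivAt (fun t : ℝ => -Real.cos t) (Real.sin t) t := by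
    intro t _
    have := (Real.hasDerivAt_cos t).neg
    rw [neg_neg] at this
    exact this
  have hu' : IntervalIntegrable (fun t : ℝ => -(t^2)⁻¹) volume 1 x := by
    apply ContinuousOn.intervalIntegrable
    apply ContinuousOn.neg
    apply ContinuousOn.inv₀ (by fun_prop)
    intro t ht
    have := hne t ht
    positivity
  have hv' : IntervalIntegrable Real.sin volume 1 x :=
    Real.continuous_sin.intervalIntegrable 1 x
  have key := integral_mul_deriv_eq_deriv_mul h1 h2 hu' hv'
  have e1 : ∀ t : ℝ, t⁻¹ * Real.sin t = Real.sin t / t := fun t => by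
    rw [inv_mul_eq_div]
  have e2 : ∀ t : ℝ, -(t^2)⁻¹ * -Real.cos t = Real.cos t / t ^ 2 := fun t => by
    rw [neg_mul_neg, inv_mul_eq_div]
  simp only [e1, e2] at key
  rw [key]
  ring

lemma G_eventually {x : ℝ} (hx : (1:ℝ) ≤ x) :
    G x = G 1 + (Real.cos 1 - Real.cos x / x - ∫ t in (1:ℝ)..x, Real.cos t / t ^ 2) := by
  rw [← parts hx, G, G]
  rw [← integral_add_adjacent_intervals (sin_div_intInt 0 1) (sin_div_intInt 1 x)]

lemma G_tendsto : ∃ L, Tendsto G atTop (𝓝 L) := by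
  refine ⟨G 1 + (Real.cos 1 - 0 - ∫ t in Set.Ioi (1:ℝ), Real.cos t / t ^ 2), ?_⟩
  have h1 : Tendsto (fun x : ℝ => Real.cos x / x) atTop (𝓝 0) := by
    refine squeeze_zero_norm' (a := fun x : ℝ => x⁻¹) ?_ tendsto_inv_atTop_zero
    filter_upwards [eventually_ge_atTop (1:ℝ)] with x hx
    rw [Real.norm_eq_abs, abs_div, abs_of_pos (by linarith : (0:ℝ) < x), inv_eq_one_div,
      div_le_div_iff_of_pos_right (by linarith)]
    exact Real.abs_cos_le_one x
  have h2 : Tendsto (fun x : ℝ => ∫ t in (1:ℝ)..x, Real.cos t / t ^ 2) atTop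
      (𝓝 (∫ t in Set.Ioi (1:ℝ), Real.cos t / t ^ 2)) :=
    intervalIntegral_tendsto_integral_Ioi 1 cos_div_sq_integrableOn tendsto_id
  have h3 := (((tendsto_const_nhds (x := Real.cos 1)).sub h1).sub h2).const_add (G 1)
  apply h3.congr'
  filter_upwards [eventually_ge_atTop (1:ℝ)] with x hx
  exact (G_eventually hx).symm

/-! ### Dirichlet kernel -/

noncomputable def D (n : ℕ) (u : ℝ) : ℝ :=
  1 + 2 * ∑ k ∈ Finset.range n, Real.cos (2 * (k + 1) * u)

lemma D_cont (n : ℕ) : Continuous (D n) := by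
  unfold D; fun_prop

lemma sin_succ (m u : ℝ) :
    Real.sin ((m + 2) * u) = Real.sin (m * u) + 2 * Real.cos ((m + 1) * u) * Real.sin u := by
  have h1 := Real.sin_add ((m + 1) * u) u
  have h2 := Real.sin_sub ((m + 1) * u) u
  have e1 : (m + 2) * u = (m + 1) * u + u := by ring
  have e2 : m * u = (m + 1) * u - u := by ring
  rw [e1, e2, h1, h2]; ring

lemma sin_odd_mul (n : ℕ) (u : ℝ) :
    Real.sin ((2 * n + 1) * u) = Real.sin u * D n u := by
  induction n with
  | zero => simp [D]
  | succ n ih =>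
    have key := sin_succ (2 * (n:ℝ) + 1) u
    rw [ih, show Real.cos ((2 * (n:ℝ) + 1 + 1) * u) = Real.cos (2 * ((n:ℝ) + 1) * u) by
      ring_nf] at key
    have e : ((2 * ((n:ℕ)+1) + 1 : ℕ) : ℝ) * u = (2 * (n:ℝ) + 1 + 2) * u := by push_cast; ring
    push_cast
    push_cast at e
    rw [e, key, D, D, Finset.sum_range_succ]
    ring

lemma integral_D (n : ℕ) : ∫ u in (0:ℝ)..(π/2), D n u = π / 2 := by
  unfold D
  rw [intervalIntegral.integral_add (intervalIntegrable_const)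
    (by apply Continuous.intervalIntegrable; fun_prop)]
  rw [intervalIntegral.integral_const_mul, intervalIntegral.integral_finset_sum
    (f := fun (k : ℕ) (u : ℝ) => Real.cos (2 * ((k:ℝ) + 1) * u))
    (fun k _ => (by fun_prop : Continuous fun u : ℝ => Real.cos (2*((k:ℝ)+1)*u)).intervalIntegrable _ _)]
  have : ∀ k ∈ Finset.range n, ∫ u in (0:ℝ)..(π/2), Real.cos (2 * ((k:ℝ) + 1) * u) = 0 := by
    intro k _
    have hc : (2 * ((k:ℝ) + 1)) ≠ 0 := by positivity
    rw [intervalIntegral.integral_comp_mul_left (fun u => Real.cos u) hc]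
    rw [mul_zero, integral_cos, Real.sin_zero]
    have : 2 * ((k:ℝ) + 1) * (π / 2) = ((k:ℕ)+1 : ℕ) * π := by push_cast; ring
    rw [this, Real.sin_nat_mul_pi]
    simp
  rw [Finset.sum_congr rfl this]
  simp

lemma integral_sin_div_sin (n : ℕ) :
    ∫ u in (0:ℝ)..(π/2), Real.sin ((2 * n + 1) * u) / Real.sin u = π / 2 := by
  conv_rhs => rw [← integral_D n]
  apply intervalIntegral.integral_congr_ae
  refine Eventually.of_forall fun u hu => ?_
  rw [Set.uIoc_of_le (by positivity : (0:ℝ) ≤ π/2)] at hu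
  have h1 : 0 < Real.sin u :=
    Real.sin_pos_of_pos_of_lt_pi hu.1 (lt_of_le_of_lt hu.2 (by linarith [Real.pi_pos]))
  rw [sin_odd_mul, mul_comm (Real.sin u) (D n u), mul_div_assoc, div_self h1.ne', mul_one]

lemma sinD_intInt (n : ℕ) :
    IntervalIntegrable (fun u : ℝ => Real.sin ((2 * n + 1) * u) / Real.sin u)
      volume 0 (π/2) := by
  have hD := (D_cont n).intervalIntegrable (μ := volume) 0 (π/2)
  rw [intervalIntegrable_iff] at hD ⊢
  apply hD.congr
  filter_upwards [ae_restrict_mem measurableSet_uIoc] with u hu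
  rw [Set.uIoc_of_le (by positivity : (0:ℝ) ≤ π/2)] at hu
  have h1 : 0 < Real.sin u :=
    Real.sin_pos_of_pos_of_lt_pi hu.1 (lt_of_le_of_lt hu.2 (by linarith [Real.pi_pos]))
  rw [sin_odd_mul, mul_comm (Real.sin u) (D n u), mul_div_assoc, div_self h1.ne', mul_one]

/-! ### substitution -/

lemma G_odd_eq (c : ℝ) (hc : 0 < c) :
    G (c * (π/2)) = ∫ u in (0:ℝ)..(π/2), Real.sin (c * u) / u := by
  have key : ∫ u in (0:ℝ)..(π/2), Real.sin (c*u) / (c*u)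
      = c⁻¹ * ∫ t in (0:ℝ)..(c*(π/2)), Real.sin t / t := by
    have := intervalIntegral.integral_comp_mul_left (a := 0) (b := π/2)
      (fun t : ℝ => Real.sin t / t) hc.ne'
    simpa [smul_eq_mul] using this
  have e : ∀ u : ℝ, c * (Real.sin (c * u) / (c * u)) = Real.sin (c * u) / u := by
    intro u
    rcases eq_or_ne u 0 with h | h
    · simp [h]
    · rw [mul_div_assoc']
      exact mul_div_mul_left _ _ hc.ne'
  calc G (c * (π/2)) = c * (c⁻¹ * G (c * (π/2))) := by field_simp
    _ = c * ∫ u in (0:ℝ)..(π/2), Real.sin (c * u) / (c * u) := by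
        simp only [G]; rw [← key]
    _ = ∫ u in (0:ℝ)..(π/2), c * (Real.sin (c * u) / (c * u)) := by
        rw [← intervalIntegral.integral_const_mul]
    _ = ∫ u in (0:ℝ)..(π/2), Real.sin (c * u) / u := by simp_rw [e]


/-! ### the function `1/u - 1/sin u` -/

noncomputable def g (u : ℝ) : ℝ := 1 / u - 1 / Real.sin u

lemma g_meas : Measurable g :=
  (measurable_const.div measurable_id).sub (measurable_const.div Real.measurable_sin)

lemma g_bound {u : ℝ} (hu : u ∈ Set.Ioc 0 (π/2)) : |g u| ≤ π^2 / 4 := by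
  obtain ⟨h0, h2⟩ := hu
  have hπ := Real.pi_pos
  have hs : 0 < Real.sin u := Real.sin_pos_of_pos_of_lt_pi h0 (by linarith)
  have hsle : Real.sin u ≤ u := Real.sin_le h0.le
  have hslb : 2 / π * u ≤ Real.sin u := Real.mul_le_sin h0.le h2
  have hrepr : g u = -((u - Real.sin u) / (u * Real.sin u)) := by
    unfold g
    rw [div_sub_div _ _ h0.ne' hs.ne']
    rw [← neg_div]
    congr 1
    ring
  rw [hrepr, abs_neg, abs_of_nonneg (div_nonneg (by linarith) (by positivity))]
  rcases le_or_gt u 1 with h1 | h1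
  · have hcube : u - u^3/4 < Real.sin u := by
      have := Real.sin_gt_sub_cube h0
      have : 0 < u^3 := by positivity
      linarith
    have hcd : u * (2 / π * u) ≤ u * Real.sin u :=
      mul_le_mul_of_nonneg_left hslb h0.le
    have hstep : (u - Real.sin u) / (u * Real.sin u) ≤ (u^3/4) / (u * (2 / π * u)) :=
      div_le_div₀ (by positivity) (by linarith) (by positivity) hcd
    have heq : (u^3/4) / (u * (2 / π * u)) = π * u / 8 := by
      rw [div_eq_div_iff (by positivity) (by norm_num : (8:ℝ) ≠ 0)]
      field_simp
      ring
    rw [heq] at hstep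
    nlinarith
  · have hc : 2 / π ≤ u * Real.sin u := by
      nlinarith [mul_pos (sub_pos.2 h1) hs]
    have hstep : (u - Real.sin u) / (u * Real.sin u) ≤ (π/2) / (2/π) :=
      div_le_div₀ (by positivity) (by linarith) (by positivity) hc
    have heq : (π/2) / (2/π) = π^2 / 4 := by
      rw [div_div_eq_mul_div]
      ring
    rw [heq] at hstep
    exact hstep

noncomputable def gInd : ℝ → ℝ := (Set.Ioc 0 (π/2)).indicator g

lemma gInd_meas : Measurable gInd := g_meas.indicator measurableSet_Ioc

lemma gInd_int : Integrable gInd := by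
  unfold gInd
  rw [integrable_indicator_iff measurableSet_Ioc]
  refine Integrable.mono' (g := fun _ : ℝ => π^2/4)
    (integrableOn_const measure_Ioc_lt_top.ne)
    g_meas.aestronglyMeasurable.restrict ?_
  filter_upwards [ae_restrict_mem measurableSet_Ioc] with u hu
  exact g_bound hu

/-! ### Riemann–Lebesgue -/

lemma tendsto_J :
    Tendsto (fun w : ℝ => ∫ v : ℝ, Real.sin (w * v) * gInd v) atTop (𝓝 0) := by
  have hπ := Real.pi_pos
  have RL := Real.zero_at_infty_fourier (fun v : ℝ => (gInd v : ℂ))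
  have him : Tendsto (fun ξ : ℝ => (𝓕 (fun v : ℝ => (gInd v : ℂ)) ξ).im)
      (cocompact ℝ) (𝓝 0) := by
    simpa [Function.comp_def] using (Complex.continuous_im.tendsto 0).comp RL
  have hdiv : Tendsto (fun w : ℝ => w / (2 * π)) atTop (cocompact ℝ) := by
    rw [cocompact_eq_atBot_atTop]
    exact (tendsto_id.atTop_div_const (by positivity)).mono_right le_sup_right
  have hcomp := (him.comp hdiv).neg
  rw [neg_zero] at hcomp
  apply hcomp.congr
  intro w
  simp only [Function.comp_apply]
  rw [Real.fourier_real_eq_integral_exp_smul]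
  have hint : Integrable (fun v : ℝ =>
      Complex.exp (↑(-2 * π * v * (w / (2*π))) * Complex.I) • (gInd v : ℂ)) := by
    refine Integrable.mono' (g := fun v => |gInd v|) gInd_int.abs ?_ ?_
    · refine AEStronglyMeasurable.fun_smul ?_ ?_
      · apply Continuous.aestronglyMeasurable
        fun_prop
      · exact (Complex.measurable_ofReal.comp gInd_meas).aestronglyMeasurable
    · refine Eventually.of_forall fun v => ?_
      rw [smul_eq_mul, norm_mul, Complex.norm_exp_ofReal_mul_I, one_mul,
        Complex.norm_real, Real.norm_eq_abs]
  have him2 := integral_im hint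
  simp only [RCLike.im_eq_complex_im] at him2
  rw [← him2, ← MeasureTheory.integral_neg]
  congr 1
  funext v
  have eθ : (-2 * π * v * (w / (2*π))) = -(w * v) := by
    field_simp
  rw [smul_eq_mul, eθ]
  simp only [Complex.mul_im, Complex.ofReal_re, Complex.ofReal_im, mul_zero, add_zero]
  have hexp : (Complex.exp (((-(w * v) : ℝ) : ℂ) * Complex.I)).im = Real.sin (-(w * v)) :=
    Complex.exp_ofReal_mul_I_im _
  rw [hexp, Real.sin_neg]
  ring

lemma split (n : ℕ) :
    ∫ u in (0:ℝ)..(π/2), Real.sin ((2*n+1) * u) / u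
      = (∫ v : ℝ, Real.sin ((2*n+1) * v) * gInd v) + π/2 := by
  have hπ := Real.pi_pos
  have e1 : ∫ v : ℝ, Real.sin ((2*n+1) * v) * gInd v
      = ∫ u in (0:ℝ)..(π/2), Real.sin ((2*n+1) * u) * g u := by
    unfold gInd
    rw [intervalIntegral.integral_of_le (by positivity), ← MeasureTheory.integral_indicator measurableSet_Ioc]
    congr 1
    funext v
    rw [Set.indicator_mul_right]
  have hsplit : ∀ u : ℝ, Real.sin ((2*n+1) * u) / u
      = Real.sin ((2*n+1) * u) * g u + Real.sin ((2*n+1) * u) / Real.sin u := by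
    intro u; unfold g; ring
  have hA : IntervalIntegrable (fun u : ℝ => Real.sin ((2*n+1)*u) * g u) volume 0 (π/2) := by
    rw [intervalIntegrable_iff]
    refine Integrable.mono' (g := fun _ : ℝ => π^2/4)
      (integrableOn_const measure_Ioc_lt_top.ne)
      (((by fun_prop : Measurable fun u : ℝ => Real.sin ((2*n+1)*u))).mul
        g_meas).aestronglyMeasurable.restrict ?_
    filter_upwards [ae_restrict_mem measurableSet_uIoc] with u hu
    rw [Set.uIoc_of_le (by positivity : (0:ℝ) ≤ π/2)] at hu
    rw [Real.norm_eq_abs, abs_mul]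
    calc |Real.sin ((2*n+1)*u)| * |g u| ≤ 1 * (π^2/4) :=
          mul_le_mul (Real.abs_sin_le_one _) (g_bound hu) (abs_nonneg _) zero_le_one
      _ = π^2/4 := one_mul _
  simp_rw [hsplit]
  rw [intervalIntegral.integral_add hA (sinD_intInt n), integral_sin_div_sin n, e1]

lemma G_atTop : Tendsto G atTop (𝓝 (π/2)) := by
  have hπ := Real.pi_pos
  obtain ⟨L, hL⟩ := G_tendsto
  have hn' : Tendsto (fun n : ℕ => 2*(n:ℝ)+1) atTop atTop := by
    apply tendsto_atTop_add_const_right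
    exact (tendsto_natCast_atTop_atTop).const_mul_atTop two_pos
  have hn : Tendsto (fun n : ℕ => (2*(n:ℝ)+1) * (π/2)) atTop atTop :=
    hn'.atTop_mul_const (by positivity)
  have h1 : Tendsto (fun n : ℕ => G ((2*(n:ℝ)+1) * (π/2))) atTop (𝓝 L) := hL.comp hn
  have h2 : Tendsto (fun n : ℕ => G ((2*(n:ℝ)+1) * (π/2))) atTop (𝓝 (π/2)) := by
    have hq : ∀ n : ℕ, G ((2*(n:ℝ)+1) * (π/2))
        = (∫ v : ℝ, Real.sin ((2*(n:ℝ)+1) * v) * gInd v) + π/2 := fun n => by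
      rw [G_odd_eq _ (by positivity), split n]
    simp_rw [hq]
    have h3 := (tendsto_J.comp hn').add_const (π/2)
    simpa using h3
  have hLpi : L = π/2 := tendsto_nhds_unique h1 h2
  rwa [hLpi] at hL

lemma G_neg (x : ℝ) : G (-x) = -G x := by
  have h1 : ∫ u in (0:ℝ)..x, Real.sin (-u) / (-u) = ∫ u in (-x)..(0:ℝ), Real.sin u / u := by
    simpa using intervalIntegral.integral_comp_neg (a := 0) (b := x) (fun u => Real.sin u / u)
  have h2 : ∀ u : ℝ, Real.sin (-u) / (-u) = Real.sin u / u := fun u => by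
    rw [Real.sin_neg, neg_div_neg_eq]
  simp_rw [h2] at h1
  rw [G, G, intervalIntegral.integral_symm, ← h1]

end SiAux



/-- `Si(x) → 1` as `x → +∞` and `Si(x) → -1` as `x → -∞`. -/
theorem stmt7 : Tendsto Si atTop (nhds 1) ∧ Tendsto Si atBot (nhds (-1)) := by
  have hπ := Real.pi_pos
  have hSi : ∀ x, Si x = 2 / Real.pi * SiAux.G x := fun _ => rfl
  have hT : Tendsto Si atTop (𝓝 1) := by
    have h := SiAux.G_atTop.const_mul (2 / Real.pi)
    rw [show 2 / Real.pi * (Real.pi / 2) = 1 by field_simp] at h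
    exact h.congr fun x => (hSi x).symm
  refine ⟨hT, ?_⟩
  have hneg : ∀ x, Si x = -Si (-x) := by
    intro x
    rw [hSi, hSi, SiAux.G_neg]
    ring
  have h2 : Tendsto (fun x : ℝ => Si (-x)) atBot (𝓝 1) := hT.comp tendsto_neg_atBot_atTop
  have h3 : Tendsto (fun x : ℝ => -Si (-x)) atBot (𝓝 (-1)) := by
    simpa using h2.neg
  exact h3.congr fun x => (hneg x).symm
end

section
/- Let A, B, Z be bounded operators on a Hilbert space where Z is a self-adjoint unitary, B anticommutes with Z, Ω is a unit vector with ZΩ = Ω, and suppose there are unitaries U(t) with U(t)Ω = Ω such that U(t)Ψ converges weakly to ⟨Ω, Ψ⟩Ω for every Ψ as t → ∞. If A·U(t)·BB*Ω = c(t)·U(t)·B*Ω for scalars c(t) converging to c(∞), then ⟨Ω, BB*Ω⟩·AΩ = c(∞)⟨Ω, B*Ω⟩·Ω. Moreover, if additionally ⟨Ω, B*Ω⟩ = 0, then ⟨Ω, BB*Ω⟩·AΩ = 0, so AΩ = 0 or B*Ω = 0. -/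
open Filter
open scoped InnerProductSpace

/-- Cluster argument: if `Z` is a self-adjoint unitary anticommuting with `B`,
`ZΩ = Ω`, the unitaries `U(t)` fix `Ω` and satisfy the weak cluster property, and
`A U(t) BB* Ω = c(t) U(t) B* Ω` with `c(t) → c(∞)`, then
`⟨Ω, BB*Ω⟩ AΩ = c(∞) ⟨Ω, B*Ω⟩ Ω`, hence `AΩ = 0` or `B*Ω = 0`. -/
theorem stmt13 {H : Type*} [NormedAddCommGroup H] [InnerProductSpace ℂ H] [CompleteSpace H]
    (A B Z : H →L[ℂ] H) (U : ℝ → (H →L[ℂ] H)) (Ω : H) (hΩ : ‖Ω‖ = 1)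
    (hZsa : IsSelfAdjoint Z) (hZ2 : Z * Z = 1)
    (hZB : Z * B + B * Z = 0) (hZΩ : Z Ω = Ω)
    (hUunit : ∀ t, U t * star (U t) = 1 ∧ star (U t) * U t = 1)
    (hUΩ : ∀ t, U t Ω = Ω)
    (hcluster : ∀ Ψ φ : H,
      Tendsto (fun t => (⟪φ, U t Ψ⟫_ℂ)) atTop (nhds (⟪Ω, Ψ⟫_ℂ * ⟪φ, Ω⟫_ℂ)))
    (c : ℝ → ℂ) (cinf : ℂ) (hc : Tendsto c atTop (nhds cinf))
    (hrel : ∀ t, A (U t ((B * star B) Ω)) = c t • U t ((star B) Ω)) :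
    (⟪Ω, (B * star B) Ω⟫_ℂ) • A Ω = (cinf * ⟪Ω, (star B) Ω⟫_ℂ) • Ω ∧
      (A Ω = 0 ∨ (star B) Ω = 0) := by
  have hZsym : ∀ x y : H, ⟪Z x, y⟫_ℂ = ⟪x, Z y⟫_ℂ := by
    intro x y
    rw [← ContinuousLinearMap.adjoint_inner_left, ← ContinuousLinearMap.star_eq_adjoint,
      hZsa.star_eq]
  -- ⟪Ω, B* Ω⟫ = 0
  have hZB' : star B * Z + Z * star B = 0 := by
    have := congrArg star hZB
    simpa [star_add, star_mul, hZsa.star_eq, add_comm] using this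
  have hBΩ0 : ⟪Ω, (star B) Ω⟫_ℂ = 0 := by
    have h1 : (star B) Ω = (star B * Z) Ω := by simp [hZΩ]
    have h2 : star B * Z = -(Z * star B) := by linear_combination (norm := noncomm_ring) hZB'
    have : ⟪Ω, (star B) Ω⟫_ℂ = -⟪Ω, (star B) Ω⟫_ℂ := by
      calc ⟪Ω, (star B) Ω⟫_ℂ = ⟪Ω, (star B * Z) Ω⟫_ℂ := by rw [← h1]
        _ = -⟪Ω, Z ((star B) Ω)⟫_ℂ := by rw [h2]; simp
        _ = -⟪Z Ω, (star B) Ω⟫_ℂ := by rw [hZsym]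
        _ = -⟪Ω, (star B) Ω⟫_ℂ := by rw [hZΩ]
    linear_combination (1/2 : ℂ) * this
  have key : (⟪Ω, (B * star B) Ω⟫_ℂ) • A Ω = (cinf * ⟪Ω, (star B) Ω⟫_ℂ) • Ω := by
    apply ext_inner_left ℂ
    intro φ
    have hA : ∀ t, ⟪(ContinuousLinearMap.adjoint A) φ, U t ((B * star B) Ω)⟫_ℂ
        = c t * ⟪φ, U t ((star B) Ω)⟫_ℂ := by
      intro t
      rw [ContinuousLinearMap.adjoint_inner_left, hrel t, inner_smul_right]
    have lim1 : Tendsto (fun t => ⟪(ContinuousLinearMap.adjoint A) φ, U t ((B * star B) Ω)⟫_ℂ)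
        atTop (nhds (⟪Ω, (B * star B) Ω⟫_ℂ * ⟪(ContinuousLinearMap.adjoint A) φ, Ω⟫_ℂ)) :=
      hcluster _ _
    have lim2 : Tendsto (fun t => c t * ⟪φ, U t ((star B) Ω)⟫_ℂ)
        atTop (nhds (cinf * (⟪Ω, (star B) Ω⟫_ℂ * ⟪φ, Ω⟫_ℂ))) :=
      hc.mul (hcluster _ _)
    have heq : ⟪Ω, (B * star B) Ω⟫_ℂ * ⟪(ContinuousLinearMap.adjoint A) φ, Ω⟫_ℂ
        = cinf * (⟪Ω, (star B) Ω⟫_ℂ * ⟪φ, Ω⟫_ℂ) := by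
      refine tendsto_nhds_unique ?_ lim2
      simpa only [hA] using lim1
    rw [inner_smul_right, inner_smul_right, ← ContinuousLinearMap.adjoint_inner_left A,
      heq]
    ring
  refine ⟨key, ?_⟩
  have hnorm : ⟪Ω, (B * star B) Ω⟫_ℂ = (‖(star B) Ω‖ : ℂ) ^ 2 := by
    have : (B * star B) Ω = B ((star B) Ω) := rfl
    rw [this, ← ContinuousLinearMap.adjoint_inner_left, ← ContinuousLinearMap.star_eq_adjoint,
      inner_self_eq_norm_sq_to_K]
    norm_cast
  have h0 : (⟪Ω, (B * star B) Ω⟫_ℂ) • A Ω = 0 := by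
    rw [key, hBΩ0, mul_zero, zero_smul]
  rcases smul_eq_zero.mp h0 with h | h
  · right
    rw [hnorm] at h
    simpa using h
  · left; exact h
end
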